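/- If a 1-bit classical simulation protocol could reproduce, at Bob's end, the outcome statistics of the measurement M^{(A)}_twist = {P_ẑ⊗P_ẑ, P_{ẑ⊥}⊗P_ẑ, P_x̂⊗P_{ẑ⊥}, P_{x̂⊥}⊗P_{ẑ⊥}} on ψ⊗φ for all qubit states ψ (known to Alice) and φ (unknown), then it would yield a classical 1-bit strategy for the 2→1 random access code with success probability (1/2)(1 + 1/√2) > 3/4; hence no such 1-bit protocol exists. -/

import Mathlib

open Matrix Kronecker MeasureTheory ComplexOrder
noncomputable section

def ket0 : Fin 2 → ℂ := ![1, 0]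
def ket1 : Fin 2 → ℂ := ![0, 1]
def ketplus : Fin 2 → ℂ := ![(1 / Real.sqrt 2 : ℝ), (1 / Real.sqrt 2 : ℝ)]
def ketminus : Fin 2 → ℂ := ![(1 / Real.sqrt 2 : ℝ), -(1 / Real.sqrt 2 : ℝ)]
def proj (v : Fin 2 → ℂ) : Matrix (Fin 2) (Fin 2) ℂ := vecMulVec v (star v)

/-- M^{(A)}_twist = {P_ẑ⊗P_ẑ, P_{ẑ⊥}⊗P_ẑ, P_x̂⊗P_{ẑ⊥}, P_{x̂⊥}⊗P_{ẑ⊥}}. -/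
def MAtwist : Fin 4 → Matrix (Fin 2 × Fin 2) (Fin 2 × Fin 2) ℂ :=
  ![proj ket0 ⊗ₖ proj ket0, proj ket1 ⊗ₖ proj ket0,
    proj ketplus ⊗ₖ proj ket1, proj ketminus ⊗ₖ proj ket1]

/-! ### Auxiliary lemmas -/

lemma proj_psd (v : Fin 2 → ℂ) : (proj v).PosSemidef := by
  rw [posSemidef_iff_dotProduct_mulVec]
  constructor
  · ext i j
    simp [proj, vecMulVec, conjTranspose_apply, mul_comm]
  · intro x
    have : dotProduct (star x) ((proj v) *ᵥ x)
        = star (dotProduct (star v) x) * (dotProduct (star v) x) := by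
      simp [proj, vecMulVec, dotProduct, mulVec, Fin.sum_univ_two]
      ring
    rw [this]
    exact star_mul_self_nonneg _

lemma trace_proj (v : Fin 2 → ℂ) : (proj v).trace = dotProduct (star v) v := by
  simp [proj, vecMulVec, trace, dotProduct, Fin.sum_univ_two, mul_comm]

lemma trace_proj_mul (u w : Fin 2 → ℂ) :
    ((proj u) * (proj w)).trace = (dotProduct (star u) w) * (dotProduct (star w) u) := by
  simp [proj, vecMulVec, trace, Matrix.mul_apply, dotProduct, Fin.sum_univ_two]
  ring

def cc : ℝ := Real.sqrt ((2 + Real.sqrt 2) / 4)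
def ss : ℝ := Real.sqrt ((2 - Real.sqrt 2) / 4)

lemma sqrt2_lt : Real.sqrt 2 < 2 := by
  nlinarith [Real.sq_sqrt (by norm_num : (2:ℝ) ≥ 0), Real.sqrt_nonneg 2]

lemma cc_sq : cc * cc = (2 + Real.sqrt 2) / 4 := Real.mul_self_sqrt (by positivity)
lemma ss_sq : ss * ss = (2 - Real.sqrt 2) / 4 :=
  Real.mul_self_sqrt (by nlinarith [sqrt2_lt])
lemma cc_mul_ss : cc * ss = Real.sqrt 2 / 4 := by
  rw [cc, ss, ← Real.sqrt_mul (by positivity)]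
  rw [show ((2 + Real.sqrt 2) / 4 * ((2 - Real.sqrt 2) / 4)) = (4 - Real.sqrt 2 * Real.sqrt 2)/16 by ring,
    Real.mul_self_sqrt (by norm_num)]
  rw [show ((4:ℝ)-2)/16 = 2 / 4^2 by norm_num, Real.sqrt_div' 2 (by norm_num),
    Real.sqrt_sq (by norm_num : (4:ℝ) ≥ 0)]

def vv : Bool → Bool → (Fin 2 → ℂ)
  | false, false => ![(cc:ℝ), (ss:ℝ)]
  | false, true  => ![(cc:ℝ), (-ss:ℝ)]
  | true,  false => ![(ss:ℝ), (cc:ℝ)]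
  | true,  true  => ![(ss:ℝ), (-cc:ℝ)]

lemma cs_one : cc * cc + ss * ss = 1 := by rw [cc_sq, ss_sq]; ring

lemma trace_psi (x0 x1 : Bool) : (proj (vv x0 x1)).trace = 1 := by
  cases x0 <;> cases x1 <;>
    · rw [trace_proj]
      simp [vv, dotProduct, Fin.sum_univ_two, ← Complex.ofReal_mul]
      norm_cast
      nlinarith [cs_one]

lemma trace_psi_z (x0 x1 : Bool) :
    ((proj (vv x0 x1)) * (proj (if x0 then ket1 else ket0))).trace
      = ((2 + Real.sqrt 2)/4 : ℝ) := by
  cases x0 <;> cases x1 <;>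
    · rw [trace_proj_mul]
      simp [vv, ket0, ket1, dotProduct, Fin.sum_univ_two]
      norm_cast
      rw [cc_sq]; push_cast; ring

lemma trace_psi_x (x0 x1 : Bool) :
    ((proj (vv x0 x1)) * (proj (if x1 then ketminus else ketplus))).trace
      = ((2 + Real.sqrt 2)/4 : ℝ) := by
  have h2 : (Real.sqrt 2) * (Real.sqrt 2) = 2 := Real.mul_self_sqrt (by norm_num)
  have hs2 : Real.sqrt 2 > 0 := Real.sqrt_pos.2 (by norm_num)
  cases x0 <;> cases x1 <;>
    · rw [trace_proj_mul]
      simp [vv, ketplus, ketminus, dotProduct, Fin.sum_univ_two]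
      norm_cast
      field_simp
      have e : ∀ a b : ℝ, a * b = Real.sqrt 2 / 4 → a * a + b * b = 1 →
          (((a + b) ^ 2 / Real.sqrt 2 ^ 2 : ℝ) : ℂ) * 4 = 2 + (Real.sqrt 2 : ℂ) := by
        intro a b hab haa
        rw [Real.sq_sqrt (by norm_num : (0:ℝ) ≤ 2)]
        have : ((a + b) ^ 2 / 2 : ℝ) * 4 = 2 + Real.sqrt 2 := by nlinarith
        exact_mod_cast this
      exact e _ _ (by linarith [cc_mul_ss, mul_comm cc ss]) (by linarith [cs_one])

lemma trace_kron_mul (P Q A B : Matrix (Fin 2) (Fin 2) ℂ) :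
    ((P ⊗ₖ Q) * (A ⊗ₖ B)).trace = (P*A).trace * (Q*B).trace := by
  rw [← Matrix.mul_kronecker_mul, Matrix.trace_kronecker]

lemma tr_k00 : ((proj ket0) * (proj ket0)).trace = 1 := by
  rw [trace_proj_mul]; simp [ket0, dotProduct, Fin.sum_univ_two]
lemma tr_k11 : ((proj ket1) * (proj ket1)).trace = 1 := by
  rw [trace_proj_mul]; simp [ket1, dotProduct, Fin.sum_univ_two]
lemma tr_k01 : ((proj ket0) * (proj ket1)).trace = 0 := by
  rw [trace_proj_mul]; simp [ket0, ket1, dotProduct, Fin.sum_univ_two]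
lemma tr_k10 : ((proj ket1) * (proj ket0)).trace = 0 := by
  rw [trace_proj_mul]; simp [ket0, ket1, dotProduct, Fin.sum_univ_two]

lemma tpz0 (x1 : Bool) : ((proj (vv false x1)) * (proj ket0)).trace = ((2 + Real.sqrt 2)/4 : ℝ) := by
  simpa using trace_psi_z false x1
lemma tpz1 (x1 : Bool) : ((proj (vv true x1)) * (proj ket1)).trace = ((2 + Real.sqrt 2)/4 : ℝ) := by
  simpa using trace_psi_z true x1
lemma tpx0 (x0 : Bool) : ((proj (vv x0 false)) * (proj ketplus)).trace = ((2 + Real.sqrt 2)/4 : ℝ) := by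
  simpa using trace_psi_x x0 false
lemma tpx1 (x0 : Bool) : ((proj (vv x0 true)) * (proj ketminus)).trace = ((2 + Real.sqrt 2)/4 : ℝ) := by
  simpa using trace_psi_x x0 true

def kk (y : Bool) : Fin 2 → ℂ := if y then ket1 else ket0
def kc (y xy j : Bool) : Fin 4 := if y = j then (if xy then 1 else 0) else (if xy then 3 else 2)
def yi (y : Bool) : Fin 2 := if y then 1 else 0

lemma quantum_val (x0 x1 y j : Bool) :
    ((proj (vv x0 x1) ⊗ₖ proj (kk y)) * MAtwist (kc y (if y then x1 else x0) j)).trace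
      = if j then 0 else (((2 + Real.sqrt 2)/4 : ℝ) : ℂ) := by
  cases y <;> cases j <;> cases x0 <;> cases x1 <;>
    simp [kc, kk, MAtwist, trace_kron_mul, tr_k00, tr_k11, tr_k01, tr_k10,
      tpz0, tpz1, tpx0, tpx1]

lemma psd_diag (M : Matrix (Fin 2) (Fin 2) ℂ) (h : M.PosSemidef) (d : Fin 2) :
    M d d = ((M d d).re : ℂ) ∧ 0 ≤ (M d d).re := by
  have h2 := h.dotProduct_mulVec_nonneg (Pi.single d 1)
  have he : dotProduct (star (Pi.single d 1)) (M *ᵥ (Pi.single d 1)) = M d d := by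
    fin_cases d <;>
      simp [dotProduct, mulVec, Pi.single_apply, Fin.sum_univ_two]
  rw [he] at h2
  rw [Complex.le_def] at h2
  simp at h2
  exact ⟨by rw [Complex.ext_iff]; simp [h2.2], h2.1⟩

lemma trace_mul_proj (M : Matrix (Fin 2) (Fin 2) ℂ) (y : Bool) :
    (M * proj (kk y)).trace = M (yi y) (yi y) := by
  cases y <;>
    simp [kk, yi, ket0, ket1, proj, vecMulVec, trace, Matrix.mul_apply,
      Fin.sum_univ_two]

lemma trace_phi (y : Bool) : (proj (kk y)).trace = 1 := by
  cases y <;> · rw [trace_proj]; simp [kk, ket0, ket1, dotProduct, Fin.sum_univ_two]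

lemma rac_core (A B p00 p01 p10 p11 : ℝ)
    (hA : |A| ≤ 1) (hB : |B| ≤ 1)
    (h00 : 0 ≤ p00) (h00' : p00 ≤ 1) (h01 : 0 ≤ p01) (h01' : p01 ≤ 1)
    (h10 : 0 ≤ p10) (h10' : p10 ≤ 1) (h11 : 0 ≤ p11) (h11' : p11 ≤ 1) :
    A * (p00 + p01 - p10 - p11) + B * (p00 - p01 + p10 - p11) ≤ 2 := by
  have e : A * (p00 + p01 - p10 - p11) + B * (p00 - p01 + p10 - p11)
      = (A + B) * (p00 - p11) + (A - B) * (p01 - p10) := by ring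
  rw [e]
  have h1 : (A + B) * (p00 - p11) ≤ |A + B| := by
    calc (A + B) * (p00 - p11) ≤ |(A + B) * (p00 - p11)| := le_abs_self _
    _ = |A + B| * |p00 - p11| := abs_mul _ _
    _ ≤ |A + B| * 1 := by
        gcongr
        rw [abs_le]; constructor <;> linarith
    _ = |A + B| := mul_one _
  have h2 : (A - B) * (p01 - p10) ≤ |A - B| := by
    calc (A - B) * (p01 - p10) ≤ |(A - B) * (p01 - p10)| := le_abs_self _
    _ = |A - B| * |p01 - p10| := abs_mul _ _
    _ ≤ |A - B| * 1 := by
        gcongr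
        rw [abs_le]; constructor <;> linarith
    _ = |A - B| := mul_one _
  have h3 : |A + B| + |A - B| ≤ 2 := by
    rw [abs_le] at hA hB
    rcases le_total 0 (A+B) with h | h <;> rcases le_total 0 (A-B) with h' | h'
    · rw [abs_of_nonneg h, abs_of_nonneg h']; linarith
    · rw [abs_of_nonneg h, abs_of_nonpos h']; linarith
    · rw [abs_of_nonpos h, abs_of_nonneg h']; linarith
    · rw [abs_of_nonpos h, abs_of_nonpos h']; linarith
  linarith

lemma rac_bound (p00 p01 p10 p11 af af' bf bf' : ℝ)
    (h00 : 0 ≤ p00) (h00' : p00 ≤ 1) (h01 : 0 ≤ p01) (h01' : p01 ≤ 1)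
    (h10 : 0 ≤ p10) (h10' : p10 ≤ 1) (h11 : 0 ≤ p11) (h11' : p11 ≤ 1)
    (ha : 0 ≤ af) (ha' : af ≤ 1) (hb : 0 ≤ af') (hb' : af' ≤ 1)
    (hc : 0 ≤ bf) (hc' : bf ≤ 1) (hd : 0 ≤ bf') (hd' : bf' ≤ 1) :
    (p00 * (af + bf) + (1 - p00) * (af' + bf'))
      + (p01 * (af + (1 - bf)) + (1 - p01) * (af' + (1 - bf')))
      + (p10 * ((1 - af) + bf) + (1 - p10) * ((1 - af') + bf'))
      + (p11 * ((1 - af) + (1 - bf)) + (1 - p11) * ((1 - af') + (1 - bf'))) ≤ 6 := by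
  have key := rac_core (af - af') (bf - bf') p00 p01 p10 p11
    (by rw [abs_le]; constructor <;> linarith)
    (by rw [abs_le]; constructor <;> linarith)
    h00 h00' h01 h01' h10 h10' h11 h11'
  nlinarith [key]

/-- Observation 1: no 1-bit classical simulation protocol — Alice sends
one bit m ∈ {0,1} depending on her known state ψ and shared randomness x, and Bob applies
a 4-outcome POVM depending on (m,x) to his unknown state φ — can reproduce the outcome
statistics of M^{(A)}_twist on ψ⊗φ for all qubit states ψ and φ. -/
theorem no_one_bit_simulation_of_MAtwist :
    ¬ ∃ (X : Type) (_ : MeasurableSpace X) (μ : Measure X) (_ : IsProbabilityMeasure μ)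
      (q : Bool → X → Matrix (Fin 2) (Fin 2) ℂ → ℝ)
      (E : Bool → X → Fin 4 → Matrix (Fin 2) (Fin 2) ℂ),
      (∀ x ψ, (∀ m, 0 ≤ q m x ψ) ∧ q false x ψ + q true x ψ = 1) ∧
      (∀ m x, (∀ k, (E m x k).PosSemidef) ∧ ∑ k, E m x k = 1) ∧
      (∀ ψ φ : Matrix (Fin 2) (Fin 2) ℂ,
        ψ.PosSemidef → ψ.trace = 1 → φ.PosSemidef → φ.trace = 1 →
        ∀ k : Fin 4,
          (∑ m : Bool, ∫ x, (q m x ψ : ℂ) * Matrix.trace (E m x k * φ) ∂μ) =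
            Matrix.trace ((ψ ⊗ₖ φ) * MAtwist k)) := by
  rintro ⟨X, mX, μ, hμ, q, E, hq, hE, hsim⟩
  classical
  have hre : ∀ m x k (d : Fin 2), E m x k d d = ((E m x k d d).re : ℂ) :=
    fun m x k d => (psd_diag _ ((hE m x).1 k) d).1
  have hnn : ∀ m x k (d : Fin 2), 0 ≤ (E m x k d d).re :=
    fun m x k d => (psd_diag _ ((hE m x).1 k) d).2
  have hsumE : ∀ m x (d : Fin 2),
      (E m x 0 d d).re + (E m x 1 d d).re + (E m x 2 d d).re + (E m x 3 d d).re = 1 := by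
    intro m x d
    have h2 := congrArg Complex.re (congrFun (congrFun (hE m x).2 d) d)
    simpa [Matrix.sum_apply, Fin.sum_univ_four, Matrix.one_apply_eq] using h2
  set g : (Bool × Bool × Bool × Bool × Bool) → X → ℝ := fun i x =>
    q i.2.2.2.1 x (proj (vv i.1 i.2.1)) *
      (E i.2.2.2.1 x (kc i.2.2.1 (if i.2.2.1 then i.2.1 else i.1) i.2.2.2.2)
        (yi i.2.2.1) (yi i.2.2.1)).re with hgdef
  have hgnn : ∀ i x, 0 ≤ g i x := by
    intro i x
    exact mul_nonneg ((hq x _).1 _) (hnn _ _ _ _)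
  -- the integral identities from the simulation hypothesis
  have hval : ∀ x0 x1 y j : Bool,
      (∫ x, g (x0, x1, y, false, j) x ∂μ) + (∫ x, g (x0, x1, y, true, j) x ∂μ)
        = if j then 0 else (2 + Real.sqrt 2) / 4 := by
    intro x0 x1 y j
    have hs := hsim (proj (vv x0 x1)) (proj (kk y)) (proj_psd _) (trace_psi x0 x1)
      (proj_psd _) (trace_phi y) (kc y (if y then x1 else x0) j)
    rw [quantum_val x0 x1 y j] at hs
    have hfe : ∀ m : Bool, (∫ x, (q m x (proj (vv x0 x1)) : ℂ)
        * Matrix.trace (E m x (kc y (if y then x1 else x0) j) * proj (kk y)) ∂μ)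
        = ((∫ x, g (x0, x1, y, m, j) x ∂μ : ℝ) : ℂ) := by
      intro m
      have hfe2 : (fun x => (q m x (proj (vv x0 x1)) : ℂ)
          * Matrix.trace (E m x (kc y (if y then x1 else x0) j) * proj (kk y)))
          = (fun x => ((g (x0, x1, y, m, j) x : ℝ) : ℂ)) := by
        funext x
        rw [trace_mul_proj, hgdef]
        push_cast
        rw [← hre]
      rw [hfe2]
      exact integral_ofReal
    rw [Fintype.sum_bool, hfe true, hfe false] at hs
    have hr := congrArg Complex.re hs
    cases j <;> simp [Complex.add_re, Complex.ofReal_re] at hr ⊢ <;> linarith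
  -- integrable surrogates
  set h : (Bool × Bool × Bool × Bool × Bool) → X → ℝ := fun i =>
    if Integrable (g i) μ then g i else 0 with hhdef
  have hInt : ∀ i, Integrable (h i) μ := by
    intro i
    by_cases hi : Integrable (g i) μ
    · simpa [hhdef, hi] using hi
    · simp only [hhdef, hi, if_neg, if_false]
      exact integrable_zero _ _ _
  have hieq : ∀ i, (∫ x, h i x ∂μ) = ∫ x, g i x ∂μ := by
    intro i
    by_cases hi : Integrable (g i) μ <;> simp [hhdef, hi, integral_undef]
  have hle : ∀ i x, h i x ≤ g i x := by
    intro i x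
    by_cases hi : Integrable (g i) μ <;> simp [hhdef, hi, hgnn i x]
  -- pointwise RAC bound
  have hg6 : ∀ x, (∑ i : Bool × Bool × Bool × Bool × Bool, g i x) ≤ 6 := by
    intro x
    have hqt : ∀ ψ, q true x ψ = 1 - q false x ψ := fun ψ => by linarith [(hq x ψ).2]
    have h13 : ∀ m (d : Fin 2), (E m x 1 d d).re
        = 1 - (E m x 0 d d).re - (E m x 2 d d).re - (E m x 3 d d).re :=
      fun m d => by linarith [hsumE m x d]
    have hq1 : ∀ ψ, q false x ψ ≤ 1 := fun ψ => by
      linarith [(hq x ψ).2, (hq x ψ).1 true]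
    have key := rac_bound
      (q false x (proj (vv false false))) (q false x (proj (vv false true)))
      (q false x (proj (vv true false))) (q false x (proj (vv true true)))
      ((E false x 0 0 0).re + (E false x 2 0 0).re)
      ((E true x 0 0 0).re + (E true x 2 0 0).re)
      ((E false x 0 1 1).re + (E false x 2 1 1).re)
      ((E true x 0 1 1).re + (E true x 2 1 1).re)
      ((hq x _).1 false) (hq1 _) ((hq x _).1 false) (hq1 _)
      ((hq x _).1 false) (hq1 _) ((hq x _).1 false) (hq1 _)
      (by have := hnn false x 0 0; have := hnn false x 2 0; linarith)
      (by have := hsumE false x 0; have := hnn false x 1 0; have := hnn false x 3 0; linarith)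
      (by have := hnn true x 0 0; have := hnn true x 2 0; linarith)
      (by have := hsumE true x 0; have := hnn true x 1 0; have := hnn true x 3 0; linarith)
      (by have := hnn false x 0 1; have := hnn false x 2 1; linarith)
      (by have := hsumE false x 1; have := hnn false x 1 1; have := hnn false x 3 1; linarith)
      (by have := hnn true x 0 1; have := hnn true x 2 1; linarith)
      (by have := hsumE true x 1; have := hnn true x 1 1; have := hnn true x 3 1; linarith)
    simp only [hgdef, Fintype.sum_prod_type, Fintype.sum_bool, kc, yi]
    norm_num
    simp only [hqt, h13]
    linarith [key]
  have hh6 : ∀ x, (∑ i : Bool × Bool × Bool × Bool × Bool, h i x) ≤ 6 := fun x =>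
    le_trans (Finset.sum_le_sum fun i _ => hle i x) (hg6 x)
  have hintsum : Integrable (fun x => ∑ i : Bool × Bool × Bool × Bool × Bool, h i x) μ :=
    integrable_finset_sum _ (fun i _ => hInt i)
  have e1 : (∑ i : Bool × Bool × Bool × Bool × Bool, ∫ x, h i x ∂μ)
      = ∫ x, (∑ i : Bool × Bool × Bool × Bool × Bool, h i x) ∂μ :=
    (integral_finset_sum _ (fun i _ => hInt i)).symm
  have e2 : (∫ x, (∑ i : Bool × Bool × Bool × Bool × Bool, h i x) ∂μ) ≤ 6 := by
    calc (∫ x, (∑ i : Bool × Bool × Bool × Bool × Bool, h i x) ∂μ)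
        ≤ ∫ _, (6:ℝ) ∂μ := integral_mono hintsum (integrable_const 6) (fun x => hh6 x)
    _ = 6 := by simp [measure_univ]
  have e3 : (∑ i : Bool × Bool × Bool × Bool × Bool, ∫ x, g i x ∂μ)
      = 4 + 2 * Real.sqrt 2 := by
    simp only [Fintype.sum_prod_type, Fintype.sum_bool]
    have v1 := hval false false false false
    have v2 := hval false false false true
    have v3 := hval false false true false
    have v4 := hval false false true true
    have v5 := hval false true false false
    have v6 := hval false true false true
    have v7 := hval false true true false
    have v8 := hval false true true true
    have v9 := hval true false false false
    have v10 := hval true false false true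
    have v11 := hval true false true false
    have v12 := hval true false true true
    have v13 := hval true true false false
    have v14 := hval true true false true
    have v15 := hval true true true false
    have v16 := hval true true true true
    norm_num at v1 v2 v3 v4 v5 v6 v7 v8 v9 v10 v11 v12 v13 v14 v15 v16
    linarith
  have e4 : (∑ i : Bool × Bool × Bool × Bool × Bool, ∫ x, h i x ∂μ)
      = ∑ i : Bool × Bool × Bool × Bool × Bool, ∫ x, g i x ∂μ :=
    Finset.sum_congr rfl (fun i _ => hieq i)
  have : Real.sqrt 2 ≤ 1 := by linarith
  nlinarith [Real.mul_self_sqrt (show (0:ℝ) ≤ 2 by norm_num), Real.sqrt_nonneg 2]
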